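/- Let μ be a probability measure on ℝ with cdf F and quantile function F^{-1}, with ∫|x| dμ < ∞. Then N·e_N(μ,1) = ∫_ℝ min_{j∈ℕ}|N·F(y) − j| dy, where e_N(μ,1) = W_1(N^{-1}∑_{i=1}^N δ_{F^{-1}((2i−1)/(2N))}, μ) is the minimal Wasserstein-1 distance between μ and an empirical measure on N points. -/

import Mathlib

open MeasureTheory ProbabilityTheory Filter Set

/-- Distance from `x` to the nearest nonnegative integer. -/
noncomputable def nnd (x : ℝ) : ℝ := ⨅ j : ℕ, |x - (j : ℝ)|

/-- Left-continuous quantile function of `μ`. -/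
noncomputable def qf (μ : Measure ℝ) (u : ℝ) : ℝ := sInf {x : ℝ | u ≤ cdf μ x}

/-- Minimal Wasserstein-`ρ` distance between `μ` and empirical measures on `N` points,
expressed through the quantile formula for the Wasserstein distance on `ℝ`. -/
noncomputable def eN (μ : Measure ℝ) (ρ : ℝ) (N : ℕ) : ℝ :=
  sInf ((fun x : Fin N → ℝ =>
      (∑ i : Fin N,
        ∫ u in Set.Ioc ((i : ℝ) / N) (((i : ℝ) + 1) / N), |x i - qf μ u| ^ ρ) ^ (1 / ρ)) ''
    {x : Fin N → ℝ | Monotone x})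
open scoped ENNReal

/-! Write `F = cdf μ`, `Q = qf μ` and `Iᵢ = (i/N, (i+1)/N)`. Since `Q` is monotone, the best point
for the cell `Iᵢ` is the median `Q mᵢ` at its midpoint. Slicing the region between the graph of `Q`
and the level `Q mᵢ` horizontally instead of vertically, and using `Q u ≤ y ↔ u ≤ F y`, turns this
optimal cost into `∫ (min (F y - i/N) ((i+1)/N - F y))⁺ dy`. These tents sum to `nnd (N F y) / N`,
and the first moment of `μ` makes each of the `N` integrals finite. -/

lemma monotoneOn_of_le_iff {F Q : ℝ → ℝ} {s : Set ℝ} (hQF : ∀ u ∈ s, ∀ y, Q u ≤ y ↔ u ≤ F y) :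
    MonotoneOn Q s :=
  fun u hu v hv huv => (hQF u hu _).2 (huv.trans ((hQF v hv _).1 le_rfl))

/-- Monotonicity puts half of `(a, b)` on each side of `f ((a + b) / 2)`, which makes this value
a median of `f` there. -/
theorem setIntegral_abs_sub_midpoint_le {f : ℝ → ℝ} {a b : ℝ} (hab : a < b)
    (hf : MonotoneOn f (Ioo a b)) (c : ℝ) :
    ∫ u in Ioo a b, |f ((a + b) / 2) - f u| ≤ ∫ u in Ioo a b, |c - f u| := by
  set m := (a + b) / 2 with hm
  set d := f m
  have ham : a < m := by rw [hm]; linarith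
  have hmb : m < b := by rw [hm]; linarith
  set h : ℝ → ℝ := fun u => |c - f u| - |d - f u|
  have hh : IntegrableOn h (Ioo a b) := by
    have hfm := aemeasurable_restrict_of_monotoneOn (μ := volume) measurableSet_Ioo hf
    refine Integrable.mono' (g := fun _ => |c - d|) (integrableOn_const (by simp))
      ((aemeasurable_const.sub hfm).abs.sub (aemeasurable_const.sub hfm).abs).aestronglyMeasurable
      (ae_of_all _ fun u => ?_)
    simpa [h] using abs_abs_sub_abs_le_abs_sub (c - f u) (d - f u)
  have hleft : ∫ _ in Ioc a m, c - d ≤ ∫ u in Ioc a m, h u := by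
    refine setIntegral_mono_on (integrableOn_const (by simp))
      (hh.mono_set (Ioc_subset_Ioo_right hmb)) measurableSet_Ioc fun u hu => ?_
    have : f u ≤ d := hf ⟨hu.1, hu.2.trans_lt hmb⟩ ⟨ham, hmb⟩ hu.2
    simp only [h, abs_of_nonneg (sub_nonneg.2 this)]
    linarith [le_abs_self (c - f u)]
  have hright : ∫ _ in Ioo m b, d - c ≤ ∫ u in Ioo m b, h u := by
    refine setIntegral_mono_on (integrableOn_const (by simp))
      (hh.mono_set (Ioo_subset_Ioo_left ham.le)) measurableSet_Ioo fun u hu => ?_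
    have : d ≤ f u := hf ⟨ham, hmb⟩ ⟨ham.trans hu.1, hu.2⟩ hu.1.le
    simp only [h, abs_of_nonpos (sub_nonpos.2 this)]
    linarith [neg_abs_le (c - f u)]
  have hpos : 0 ≤ ∫ u in Ioo a b, h u := by
    rw [← Ioc_union_Ioo_eq_Ioo ham.le hmb,
      setIntegral_union ((Ioc_disjoint_Ioc_of_le le_rfl).mono_right Ioo_subset_Ioc_self)
        measurableSet_Ioo (hh.mono_set (Ioc_subset_Ioo_right hmb))
        (hh.mono_set (Ioo_subset_Ioo_left ham.le))]
    simp only [setIntegral_const, Real.volume_real_Ioc_of_le ham.le,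
      Real.volume_real_Ioo_of_le hmb.le, smul_eq_mul,
      show m - a = b - m by rw [hm]; ring] at hleft hright
    linarith
  by_cases hd : IntegrableOn (fun u => |d - f u|) (Ioo a b)
  · have hsum := integral_add hh hd
    simp only [h, sub_add_cancel] at hsum
    linarith
  · rw [integral_undef hd]
    exact setIntegral_nonneg measurableSet_Ioo fun _ _ => abs_nonneg _

lemma Real.volume_setOf_le_lt_or_le_lt (x y : ℝ) :
    volume {z : ℝ | x ≤ z ∧ z < y ∨ y ≤ z ∧ z < x} = ENNReal.ofReal |y - x| := by
  rcases le_total x y with hxy | hyx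
  · have : {z : ℝ | x ≤ z ∧ z < y ∨ y ≤ z ∧ z < x} = Ico x y := by
      ext z; simp only [mem_ofPred_eq, mem_Ico]; grind
    rw [this, Real.volume_Ico, abs_of_nonneg (sub_nonneg.2 hxy)]
  · have : {z : ℝ | x ≤ z ∧ z < y ∨ y ≤ z ∧ z < x} = Ico y x := by
      ext z; simp only [mem_ofPred_eq, mem_Ico]; grind
    rw [this, Real.volume_Ico, abs_of_nonpos (sub_nonpos.2 hyx), neg_sub]

lemma Real.volume_Ioo_inter_setOf_le_lt_or_le_lt {a b : ℝ} (hab : a ≤ b) (t : ℝ) :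
    volume (Ioo a b ∩ {u | u ≤ t ∧ t < (a + b) / 2 ∨ (a + b) / 2 ≤ t ∧ t < u}) =
      ENNReal.ofReal (min (t - a) (b - t)) := by
  rcases lt_or_ge t ((a + b) / 2) with ht | ht
  · have : Ioo a b ∩ {u | u ≤ t ∧ t < (a + b) / 2 ∨ (a + b) / 2 ≤ t ∧ t < u} = Ioc a t := by
      ext u; simp only [mem_inter_iff, mem_Ioo, mem_ofPred_eq, mem_Ioc]; grind
    rw [this, Real.volume_Ioc, min_eq_left (by linarith)]
  · have : Ioo a b ∩ {u | u ≤ t ∧ t < (a + b) / 2 ∨ (a + b) / 2 ≤ t ∧ t < u} = Ioo t b := by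
      ext u; simp only [mem_inter_iff, mem_Ioo, mem_ofPred_eq]; grind
    rw [this, Real.volume_Ioo, min_eq_right (by linarith)]

/-- Both sides measure the region `{(u, y) | y lies between Q u and Q m}`, sliced in the two
directions; the Galois property `Q u ≤ y ↔ u ≤ F y` describes the horizontal slices. -/
theorem lintegral_abs_sub_midpoint_eq {F Q : ℝ → ℝ} (hF : Measurable F) {a b : ℝ} (hab : a < b)
    (hQF : ∀ u ∈ Ioo a b, ∀ y, Q u ≤ y ↔ u ≤ F y) :
    ∫⁻ u in Ioo a b, ENNReal.ofReal |Q ((a + b) / 2) - Q u| =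
      ∫⁻ y, ENNReal.ofReal (min (F y - a) (b - F y)) := by
  set m := (a + b) / 2 with hm
  have hm_mem : m ∈ Ioo a b := ⟨by rw [hm]; linarith, by rw [hm]; linarith⟩
  set T : Set (ℝ × ℝ) := {p | p.1 ≤ F p.2 ∧ F p.2 < m ∨ m ≤ F p.2 ∧ F p.2 < p.1}
  have hT : MeasurableSet T :=
    ((measurableSet_le measurable_fst (hF.comp measurable_snd)).inter
        (measurableSet_lt (hF.comp measurable_snd) measurable_const)).union
      ((measurableSet_le measurable_const (hF.comp measurable_snd)).inter
        (measurableSet_lt (hF.comp measurable_snd) measurable_fst))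
  calc ∫⁻ u in Ioo a b, ENNReal.ofReal |Q m - Q u|
      = ∫⁻ u in Ioo a b, volume (Prod.mk u ⁻¹' T) := by
        refine setLIntegral_congr_fun measurableSet_Ioo fun u hu => ?_
        have hsec : Prod.mk u ⁻¹' T = {y | Q u ≤ y ∧ y < Q m ∨ Q m ≤ y ∧ y < Q u} := by
          ext y
          simp only [T, mem_preimage, mem_ofPred_eq, hQF u hu, hQF m hm_mem, ← not_le]
        rw [hsec, Real.volume_setOf_le_lt_or_le_lt]
    _ = ∫⁻ y, volume.restrict (Ioo a b) ((fun u => (u, y)) ⁻¹' T) := by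
        rw [← Measure.prod_apply hT, Measure.prod_apply_symm hT]
    _ = ∫⁻ y, ENNReal.ofReal (min (F y - a) (b - F y)) := by
        refine lintegral_congr fun y => ?_
        rw [Measure.restrict_apply' measurableSet_Ioo, inter_comm]
        exact Real.volume_Ioo_inter_setOf_le_lt_or_le_lt hab.le (F y)

section Quantile

variable (μ : Measure ℝ)

lemma le_cdf_qf {u : ℝ} (hu : u < 1) : u ≤ cdf μ (qf μ u) := by
  have hne : {x : ℝ | u ≤ cdf μ x}.Nonempty :=
    ((tendsto_cdf_atTop μ).eventually (eventually_ge_nhds hu)).exists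
  refine ge_of_tendsto (((cdf μ).right_continuous _).mono_left
    (nhdsWithin_mono _ Ioi_subset_Ici_self)) ?_
  filter_upwards [self_mem_nhdsWithin] with x hx
  obtain ⟨s, hs, hsx⟩ := exists_lt_of_csInf_lt hne hx
  exact hs.trans (monotone_cdf μ hsx.le)

lemma qf_le_iff {u : ℝ} (hu : u ∈ Ioo 0 1) (y : ℝ) : qf μ u ≤ y ↔ u ≤ cdf μ y := by
  refine ⟨fun h => (le_cdf_qf μ hu.2).trans (monotone_cdf μ h), fun h => csInf_le ?_ h⟩
  obtain ⟨x, hx⟩ := ((tendsto_cdf_atBot μ).eventually (eventually_lt_nhds hu.1)).exists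
  exact ⟨x, fun z hz => le_of_not_gt fun hzx => (hz.trans (monotone_cdf μ hzx.le)).not_gt hx⟩

lemma monotoneOn_qf : MonotoneOn (qf μ) (Ioo 0 1) :=
  monotoneOn_of_le_iff fun _ hu => qf_le_iff μ hu

lemma integral_abs_qf_sub_eq {a b : ℝ} (ha : 0 ≤ a) (hab : a < b) (hb : b ≤ 1) :
    ∫ u in Ioo a b, |qf μ ((a + b) / 2) - qf μ u| =
      (∫⁻ y, ENNReal.ofReal (min (cdf μ y - a) (b - cdf μ y))).toReal := by
  have hsub : Ioo a b ⊆ Ioo 0 1 := Ioo_subset_Ioo ha hb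
  have hQ : AEMeasurable (qf μ) (volume.restrict (Ioo a b)) :=
    aemeasurable_restrict_of_monotoneOn measurableSet_Ioo ((monotoneOn_qf μ).mono hsub)
  rw [integral_eq_lintegral_of_nonneg_ae (f := fun u => |qf μ ((a + b) / 2) - qf μ u|)
      (ae_of_all _ fun _ => abs_nonneg _) (aemeasurable_const.sub hQ).abs.aestronglyMeasurable,
    lintegral_abs_sub_midpoint_eq (monotone_cdf μ).measurable hab
      fun u hu => qf_le_iff μ (hsub hu)]

lemma measure_Ioi_eq_ofReal_one_sub_cdf [IsProbabilityMeasure μ] (y : ℝ) :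
    μ (Ioi y) = ENNReal.ofReal (1 - cdf μ y) := by
  rw [← compl_Iic, prob_compl_eq_one_sub measurableSet_Iic, ← ofReal_cdf,
    ENNReal.ofReal_sub _ (cdf_nonneg μ y), ENNReal.ofReal_one]

lemma lintegral_min_cdf_sub_lt_top [IsProbabilityMeasure μ]
    (hmom : Integrable (fun x : ℝ => |x|) μ) {a b : ℝ} (ha : 0 ≤ a) (hb : b ≤ 1) :
    ∫⁻ y, ENNReal.ofReal (min (cdf μ y - a) (b - cdf μ y)) < ∞ := by
  have hS : MeasurableSet {p : ℝ × ℝ | |p.1| ≤ |p.2|} :=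
    measurableSet_le measurable_fst.abs measurable_snd.abs
  have hpt : ∀ y, ENNReal.ofReal (min (cdf μ y - a) (b - cdf μ y)) ≤ μ {x | |y| ≤ |x|} := by
    intro y
    rcases lt_or_ge y 0 with hy | hy
    · calc ENNReal.ofReal (min (cdf μ y - a) (b - cdf μ y)) ≤ ENNReal.ofReal (cdf μ y) :=
            ENNReal.ofReal_le_ofReal ((min_le_left _ _).trans (by linarith))
        _ = μ (Iic y) := ofReal_cdf μ y
        _ ≤ μ {x | |y| ≤ |x|} := measure_mono fun x (hx : x ≤ y) => by
            simp only [mem_ofPred_eq, abs_of_neg hy, abs_of_neg (hx.trans_lt hy)]; linarith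
    · calc ENNReal.ofReal (min (cdf μ y - a) (b - cdf μ y)) ≤ ENNReal.ofReal (1 - cdf μ y) :=
            ENNReal.ofReal_le_ofReal ((min_le_right _ _).trans (by linarith))
        _ = μ (Ioi y) := (measure_Ioi_eq_ofReal_one_sub_cdf μ y).symm
        _ ≤ μ {x | |y| ≤ |x|} := measure_mono fun x (hx : y < x) => by
            simp only [mem_ofPred_eq, abs_of_nonneg hy, abs_of_pos (hy.trans_lt hx)]; linarith
  calc ∫⁻ y, ENNReal.ofReal (min (cdf μ y - a) (b - cdf μ y))
      ≤ ∫⁻ y, μ {x | |y| ≤ |x|} := lintegral_mono hpt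
    _ = ∫⁻ x, volume {y : ℝ | |y| ≤ |x|} ∂μ :=
        (Measure.prod_apply (μ := volume) (ν := μ) hS).symm.trans (Measure.prod_apply_symm hS)
    _ = ∫⁻ x, ENNReal.ofReal (2 * |x|) ∂μ := by
        refine lintegral_congr fun x => ?_
        rw [← Real.volume_closedBall 0]
        congr 1; ext y; simp
    _ < ∞ := (hmom.const_mul 2).lintegral_lt_top

end Quantile

lemma Fin.zero_le_div_lt_succ_div_le_one {N : ℕ} (i : Fin N) :
    0 ≤ (i : ℝ) / N ∧ (i : ℝ) / N < ((i : ℝ) + 1) / N ∧ ((i : ℝ) + 1) / N ≤ 1 := by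
  have hN : (0 : ℝ) < N := by exact_mod_cast i.pos
  have hi : (i : ℝ) + 1 ≤ N := by exact_mod_cast i.isLt
  refine ⟨by positivity, by gcongr; linarith, (div_le_one hN).2 hi⟩

lemma eN_one_eq (μ : Measure ℝ) (N : ℕ) :
    eN μ 1 N = ∑ i : Fin N, ∫ u in Ioo ((i : ℝ) / N) (((i : ℝ) + 1) / N),
      |qf μ (((i : ℝ) / N + ((i : ℝ) + 1) / N) / 2) - qf μ u| := by
  have hmono : ∀ i : Fin N, MonotoneOn (qf μ) (Ioo ((i : ℝ) / N) (((i : ℝ) + 1) / N)) := fun i =>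
    have ⟨h0, _, h1⟩ := i.zero_le_div_lt_succ_div_le_one
    (monotoneOn_qf μ).mono (Ioo_subset_Ioo h0 h1)
  have hmid : ∀ i : Fin N, ((i : ℝ) / N + ((i : ℝ) + 1) / N) / 2 ∈ Ioo (0 : ℝ) 1 := fun i => by
    obtain ⟨h0, hlt, h1⟩ := i.zero_le_div_lt_succ_div_le_one
    constructor <;> linarith
  rw [eN]
  simp only [div_one, Real.rpow_one, integral_Ioc_eq_integral_Ioo]
  refine IsLeast.csInf_eq ⟨⟨fun i => qf μ (((i : ℝ) / N + ((i : ℝ) + 1) / N) / 2),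
    fun i j hij => monotoneOn_qf μ (hmid i) (hmid j) ?_, rfl⟩, ?_⟩
  · have : (i : ℝ) ≤ j := by exact_mod_cast hij
    gcongr
  · rintro _ ⟨x, -, rfl⟩
    exact Finset.sum_le_sum fun i _ =>
      setIntegral_abs_sub_midpoint_le (i.zero_le_div_lt_succ_div_le_one).2.1 (hmono i) (x i)

lemma nnd_nonneg (x : ℝ) : 0 ≤ nnd x :=
  le_ciInf fun _ => abs_nonneg _

lemma measurable_nnd : Measurable nnd :=
  Measurable.iInf fun _ => (measurable_id.sub_const _).abs

lemma nnd_eq_min {k : ℕ} {x : ℝ} (h1 : k ≤ x) (h2 : x ≤ k + 1) :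
    nnd x = min (x - k) (k + 1 - x) := by
  have hbdd : BddBelow (range fun j : ℕ => |x - j|) := ⟨0, by rintro _ ⟨j, rfl⟩; positivity⟩
  refine le_antisymm (le_min ?_ ?_) (le_ciInf fun j => ?_)
  · calc nnd x ≤ |x - k| := ciInf_le hbdd k
      _ = x - k := abs_of_nonneg (by linarith)
  · calc nnd x ≤ |x - ((k + 1 : ℕ) : ℝ)| := ciInf_le hbdd (k + 1)
      _ = k + 1 - x := by push_cast; rw [abs_of_nonpos (by linarith)]; ring
  · rcases le_or_gt j k with hj | hj
    · have : (j : ℝ) ≤ k := by exact_mod_cast hj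
      exact (min_le_left _ _).trans ((by linarith : x - k ≤ x - j).trans (le_abs_self _))
    · have : (k : ℝ) + 1 ≤ j := by exact_mod_cast hj
      exact (min_le_right _ _).trans ((by linarith : k + 1 - x ≤ -(x - j)).trans (neg_le_abs _))

lemma ofReal_nnd_eq_sum {N : ℕ} {x : ℝ} (hx0 : 0 ≤ x) (hxN : x ≤ N) :
    ENNReal.ofReal (nnd x) = ∑ i : Fin N, ENNReal.ofReal (min (x - i) (i + 1 - x)) := by
  rcases N.eq_zero_or_pos with rfl | hN
  · obtain rfl : x = 0 := le_antisymm (by simpa using hxN) hx0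
    simp [nnd_eq_min (k := 0) (x := 0) (by simp) (by simp)]
  obtain ⟨k, hkN, hk1, hk2⟩ : ∃ k < N, (k : ℝ) ≤ x ∧ x ≤ k + 1 := by
    rcases hxN.lt_or_eq with hlt | rfl
    · exact ⟨⌊x⌋₊, (Nat.floor_lt hx0).2 hlt, Nat.floor_le hx0, (Nat.lt_floor_add_one x).le⟩
    · refine ⟨N - 1, by omega, ?_, ?_⟩ <;> rw [Nat.cast_pred hN] <;> linarith
  rw [Finset.sum_eq_single_of_mem ⟨k, hkN⟩ (Finset.mem_univ _), nnd_eq_min hk1 hk2]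
  rintro i - hik
  have hik' : (i : ℕ) ≠ k := fun h => hik (Fin.ext h)
  refine ENNReal.ofReal_eq_zero.2 ?_
  rcases hik'.lt_or_gt with hlt | hgt
  · have : (i : ℝ) + 1 ≤ k := by exact_mod_cast hlt
    exact (min_le_right _ _).trans (by linarith)
  · have : (k : ℝ) + 1 ≤ i := by exact_mod_cast hgt
    exact (min_le_left _ _).trans (by linarith)

lemma ofReal_nnd_mul_eq_sum {N : ℕ} {t : ℝ} (ht0 : 0 ≤ t) (ht1 : t ≤ 1) :
    ENNReal.ofReal (nnd (N * t)) =
      N * ∑ i : Fin N, ENNReal.ofReal (min (t - i / N) ((i + 1) / N - t)) := by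
  rw [ofReal_nnd_eq_sum (by positivity) (mul_le_of_le_one_right (by positivity) ht1),
    Finset.mul_sum]
  refine Finset.sum_congr rfl fun i _ => ?_
  have hN : (N : ℝ) ≠ 0 := by exact_mod_cast i.pos.ne'
  rw [← ENNReal.ofReal_natCast, ← ENNReal.ofReal_mul (by positivity),
    mul_min_of_nonneg _ _ (by positivity)]
  congr 2 <;> field_simp

theorem stmt14_general (μ : Measure ℝ) [IsProbabilityMeasure μ]
    (hmom : Integrable (fun x : ℝ => |x|) μ) (N : ℕ) :
    (N : ℝ) * eN μ 1 N = ∫ y : ℝ, nnd ((N : ℝ) * cdf μ y) := by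
  have hcdf : Measurable (cdf μ) := (monotone_cdf μ).measurable
  have hfin : ∀ i ∈ (Finset.univ : Finset (Fin N)),
      ∫⁻ y, ENNReal.ofReal (min (cdf μ y - i / N) ((i + 1) / N - cdf μ y)) ≠ ∞ := fun i _ =>
    have ⟨h0, _, h1⟩ := i.zero_le_div_lt_succ_div_le_one
    (lintegral_min_cdf_sub_lt_top μ hmom h0 h1).ne
  rw [integral_eq_lintegral_of_nonneg_ae (ae_of_all _ fun _ => nnd_nonneg _)
      (measurable_nnd.comp (hcdf.const_mul _)).aestronglyMeasurable,
    lintegral_congr fun y => ofReal_nnd_mul_eq_sum (cdf_nonneg μ y) (cdf_le_one μ y),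
    lintegral_const_mul' _ _ (ENNReal.natCast_ne_top N),
    lintegral_finsetSum _ fun i _ => by fun_prop, ENNReal.toReal_mul, ENNReal.toReal_natCast,
    ENNReal.toReal_sum hfin, eN_one_eq]
  congr 1
  refine Finset.sum_congr rfl fun i _ => ?_
  obtain ⟨ha, hab, hb⟩ := i.zero_le_div_lt_succ_div_le_one
  exact integral_abs_qf_sub_eq μ ha hab hb

theorem stmt14 (μ : Measure ℝ) [IsProbabilityMeasure μ]
    (hmom : Integrable (fun x : ℝ => |x|) μ) (N : ℕ) (hN : 1 ≤ N) :
    (N : ℝ) * eN μ 1 N = ∫ y : ℝ, nnd ((N : ℝ) * cdf μ y) :=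
  stmt14_general μ hmom N
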